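/- arXiv:2308.10226 — 6 statements merged into one kernel-verified Lean document; each statement's English description precedes it below -/
import Mathlib

section
/- Every linear clearing price vector p minimizes the clearing objective W(·, v) over ℝ_{≥0}^m, where W(p, v) := ⟨c, p⟩ + Σ_{i∈N} max_{x∈X} (v_i(x) − ⟨p, x⟩). -/
/-- Every linear clearing price vector `p` minimizes the clearing objective
`W(q, v) = ⟨c, q⟩ + Σᵢ U(q, vᵢ)` over `ℝ_{≥0}^m`, where `U(q, vᵢ)` is bidder `i`'s
indirect utility `max_{x∈X} (vᵢ(x) − ⟨q, x⟩)`. -/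
theorem clearing_prices_minimize_W (n m : ℕ) (c : Fin m → ℕ)
    (v : Fin n → (Fin m → ℕ) → ℝ)
    (U : Fin n → (Fin m → ℝ) → ℝ)
    (hU : ∀ i (q : Fin m → ℝ), IsGreatest
      {u : ℝ | ∃ x : Fin m → ℕ, (∀ j, x j ≤ c j) ∧
        u = v i x - ∑ j, q j * (x j : ℝ)} (U i q))
    (p : Fin m → ℝ) (hp : ∀ j, 0 ≤ p j)
    (a : Fin n → Fin m → ℕ)
    (haX : ∀ i j, a i j ≤ c j)
    (hfeas : ∀ j, ∑ i, a i j ≤ c j)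
    (hmax : ∀ i, v i (a i) - ∑ j, p j * (a i j : ℝ) = U i p)
    (hrev : ∑ i, ∑ j, p j * (a i j : ℝ) = ∑ j, (c j : ℝ) * p j) :
    ∀ q : Fin m → ℝ, (∀ j, 0 ≤ q j) →
      (∑ j, (c j : ℝ) * p j) + ∑ i, U i p ≤ (∑ j, (c j : ℝ) * q j) + ∑ i, U i q := by
  intro q hq
  -- LHS = Σ v_i(a_i)
  have hL : (∑ j, (c j : ℝ) * p j) + ∑ i, U i p = ∑ i, v i (a i) := by
    rw [← hrev]
    rw [← Finset.sum_add_distrib]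
    congr 1; ext i
    rw [← hmax i]; ring
  rw [hL]
  have hUb : ∀ i, v i (a i) - ∑ j, q j * (a i j : ℝ) ≤ U i q := by
    intro i
    exact (hU i q).2 ⟨a i, haX i, rfl⟩
  have h1 : ∑ i, v i (a i) ≤ (∑ i, ∑ j, q j * (a i j : ℝ)) + ∑ i, U i q := by
    rw [← Finset.sum_add_distrib]
    apply Finset.sum_le_sum
    intro i _
    linarith [hUb i]
  have h2 : ∑ i, ∑ j, q j * (a i j : ℝ) ≤ ∑ j, (c j : ℝ) * q j := by
    rw [Finset.sum_comm]
    apply Finset.sum_le_sum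
    intro j _
    have : ∑ i, q j * (a i j : ℝ) = q j * ∑ i, (a i j : ℝ) := by
      rw [Finset.mul_sum]
    rw [this, mul_comm]
    apply mul_le_mul_of_nonneg_right _ (hq j)
    have := hfeas j
    push_cast [← Nat.cast_sum]
    exact_mod_cast this
  linarith
end

section
/- Suppose a linear clearing price vector exists. Then every minimizer p' of W(·, v) := ⟨c, ·⟩ + Σ_{i∈N} max_{x∈X} (v_i(x) − ⟨·, x⟩) over ℝ_{≥0}^m is itself a clearing price vector: the clearing allocation a(p) supported by any clearing price p is also supported by p', i.e., each a_i(p) maximizes v_i(x) − ⟨p', x⟩ over X and Σ_i ⟨p', a_i(p)⟩ = ⟨c, p'⟩. -/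
/-- If a linear clearing price vector `p` (with supported allocation `a`) exists, then every
minimizer `p'` of `W(·, v) = ⟨c, ·⟩ + Σᵢ max_{x∈X}(vᵢ(x) − ⟨·, x⟩)` over `ℝ_{≥0}^m` is itself
a clearing price vector: `a` is also supported by `p'`, i.e. each `aᵢ` maximizes
`vᵢ(x) − ⟨p', x⟩` over `X` and `Σᵢ ⟨p', aᵢ⟩ = ⟨c, p'⟩`. -/
theorem minimizer_of_W_is_clearing_price (n m : ℕ) (c : Fin m → ℕ)
    (v : Fin n → (Fin m → ℕ) → ℝ)
    (U : Fin n → (Fin m → ℝ) → ℝ)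
    (hU : ∀ i (q : Fin m → ℝ), IsGreatest
      {u : ℝ | ∃ x : Fin m → ℕ, (∀ j, x j ≤ c j) ∧
        u = v i x - ∑ j, q j * (x j : ℝ)} (U i q))
    -- `p` is a clearing price with supported feasible allocation `a`
    (p : Fin m → ℝ) (hp : ∀ j, 0 ≤ p j)
    (a : Fin n → Fin m → ℕ)
    (haX : ∀ i j, a i j ≤ c j)
    (hfeas : ∀ j, ∑ i, a i j ≤ c j)
    (hmax : ∀ i, v i (a i) - ∑ j, p j * (a i j : ℝ) = U i p)
    (hrev : ∑ i, ∑ j, p j * (a i j : ℝ) = ∑ j, (c j : ℝ) * p j)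
    -- `p'` minimizes `W` over nonnegative prices
    (p' : Fin m → ℝ) (hp' : ∀ j, 0 ≤ p' j)
    (hmin : ∀ q : Fin m → ℝ, (∀ j, 0 ≤ q j) →
      (∑ j, (c j : ℝ) * p' j) + ∑ i, U i p' ≤ (∑ j, (c j : ℝ) * q j) + ∑ i, U i q) :
    (∀ i, v i (a i) - ∑ j, p' j * (a i j : ℝ) = U i p') ∧
    (∑ i, ∑ j, p' j * (a i j : ℝ) = ∑ j, (c j : ℝ) * p' j) := by
  -- termwise bound: each aᵢ is feasible in the max defining U i p'
  have hle : ∀ i, v i (a i) - ∑ j, p' j * (a i j : ℝ) ≤ U i p' :=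
    fun i => (hU i p').2 ⟨a i, haX i, rfl⟩
  -- supply slack is nonnegative
  have hslack : ∑ i, ∑ j, p' j * (a i j : ℝ) ≤ ∑ j, (c j : ℝ) * p' j := by
    rw [Finset.sum_comm]
    apply Finset.sum_le_sum
    intro j _
    rw [← Finset.mul_sum, mul_comm]
    apply mul_le_mul_of_nonneg_right _ (hp' j)
    rw [← Nat.cast_sum]
    exact_mod_cast hfeas j
  -- W(p) = Σ vᵢ(aᵢ)
  have hWp : (∑ j, (c j : ℝ) * p j) + ∑ i, U i p = ∑ i, v i (a i) := by
    have h1 : ∑ i, U i p = ∑ i, (v i (a i) - ∑ j, p j * (a i j : ℝ)) :=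
      Finset.sum_congr rfl fun i _ => (hmax i).symm
    rw [h1, Finset.sum_sub_distrib, ← hrev]
    ring
  have key := hmin p hp
  rw [hWp] at key
  -- lower bound chain
  have hsplit : ∑ i, v i (a i) =
      (∑ i, ∑ j, p' j * (a i j : ℝ)) + ∑ i, (v i (a i) - ∑ j, p' j * (a i j : ℝ)) := by
    rw [Finset.sum_sub_distrib]; ring
  have hT : ∑ i, (v i (a i) - ∑ j, p' j * (a i j : ℝ)) ≤ ∑ i, U i p' :=
    Finset.sum_le_sum fun i _ => hle i
  -- equality forced
  have heq : (∑ j, (c j : ℝ) * p' j) + ∑ i, U i p'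
      = (∑ i, ∑ j, p' j * (a i j : ℝ)) + ∑ i, (v i (a i) - ∑ j, p' j * (a i j : ℝ)) := by
    rw [← hsplit]
    exact le_antisymm key (by linarith)
  have hTeq : ∑ i, (v i (a i) - ∑ j, p' j * (a i j : ℝ)) = ∑ i, U i p' := by
    linarith
  have hReq : ∑ i, ∑ j, p' j * (a i j : ℝ) = ∑ j, (c j : ℝ) * p' j := by
    linarith
  refine ⟨fun i => ?_, hReq⟩
  -- termwise equality from equal sums + termwise ≤
  by_contra h
  have hlt : v i (a i) - ∑ j, p' j * (a i j : ℝ) < U i p' := lt_of_le_of_ne (hle i) h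
  have := Finset.sum_lt_sum (fun k _ => hle k) ⟨i, Finset.mem_univ i, hlt⟩
  exact absurd hTeq (ne_of_lt this)
end

section
/- If linear clearing prices exist, then every minimizer of W(·, v) over ℝ_{≥0}^m subject to the constraint that some profile of utility-maximizing bundles (x*_i(p̃))_{i∈N} is a feasible allocation, is a clearing price vector and the corresponding supported allocation is efficient (maximizes Σ_i v_i(a_i) over feasible allocations). -/
/-- If linear clearing prices exist, then every minimizer `p'` of `W(·, v)` over `ℝ_{≥0}^m`
subject to the constraint that some profile of utility-maximizing bundles is a feasible
allocation, is a clearing price vector and the corresponding supported allocation is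
efficient (it maximizes `Σᵢ vᵢ(aᵢ)` over feasible allocations). -/
theorem constrained_minimizer_of_W_is_clearing_and_efficient
    (n m : ℕ) (c : Fin m → ℕ)
    (v : Fin n → (Fin m → ℕ) → ℝ)
    (U : Fin n → (Fin m → ℝ) → ℝ)
    (hU : ∀ i (q : Fin m → ℝ), IsGreatest
      {u : ℝ | ∃ x : Fin m → ℕ, (∀ j, x j ≤ c j) ∧
        u = v i x - ∑ j, q j * (x j : ℝ)} (U i q))
    -- a linear clearing price vector exists
    (hexists : ∃ (p : Fin m → ℝ) (a : Fin n → Fin m → ℕ),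
      (∀ j, 0 ≤ p j) ∧ (∀ i j, a i j ≤ c j) ∧ (∀ j, ∑ i, a i j ≤ c j) ∧
      (∀ i, v i (a i) - ∑ j, p j * (a i j : ℝ) = U i p) ∧
      (∑ i, ∑ j, p j * (a i j : ℝ) = ∑ j, (c j : ℝ) * p j))
    -- `p'` is nonnegative and satisfies the feasibility constraint
    (p' : Fin m → ℝ) (hp' : ∀ j, 0 ≤ p' j)
    (hC' : ∃ xs : Fin n → Fin m → ℕ,
      (∀ i j, xs i j ≤ c j) ∧ (∀ j, ∑ i, xs i j ≤ c j) ∧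
      (∀ i, v i (xs i) - ∑ j, p' j * (xs i j : ℝ) = U i p'))
    -- `p'` minimizes `W` among nonnegative prices satisfying the constraint
    (hmin : ∀ q : Fin m → ℝ, (∀ j, 0 ≤ q j) →
      (∃ xs : Fin n → Fin m → ℕ,
        (∀ i j, xs i j ≤ c j) ∧ (∀ j, ∑ i, xs i j ≤ c j) ∧
        (∀ i, v i (xs i) - ∑ j, q j * (xs i j : ℝ) = U i q)) →
      (∑ j, (c j : ℝ) * p' j) + ∑ i, U i p' ≤ (∑ j, (c j : ℝ) * q j) + ∑ i, U i q) :
    ∃ a' : Fin n → Fin m → ℕ,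
      (∀ i j, a' i j ≤ c j) ∧ (∀ j, ∑ i, a' i j ≤ c j) ∧
      (∀ i, v i (a' i) - ∑ j, p' j * (a' i j : ℝ) = U i p') ∧
      (∑ i, ∑ j, p' j * (a' i j : ℝ) = ∑ j, (c j : ℝ) * p' j) ∧
      (∀ b : Fin n → Fin m → ℕ, (∀ i j, b i j ≤ c j) → (∀ j, ∑ i, b i j ≤ c j) →
        ∑ i, v i (b i) ≤ ∑ i, v i (a' i)) := by
  obtain ⟨p, a, hp, hac, haf, hamax, harev⟩ := hexists
  -- key: any feasible allocation's welfare is at most W(q, v) for nonneg q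
  have hrev : ∀ (q : Fin m → ℝ), (∀ j, 0 ≤ q j) →
      ∀ (b : Fin n → Fin m → ℕ), (∀ j, ∑ i, b i j ≤ c j) →
      ∑ i, ∑ j, q j * (b i j : ℝ) ≤ ∑ j, (c j : ℝ) * q j := by
    intro q hq b hbf
    rw [Finset.sum_comm]
    refine Finset.sum_le_sum fun j _ => ?_
    have hcb : (∑ i, (b i j : ℝ)) ≤ (c j : ℝ) := by exact_mod_cast hbf j
    calc ∑ i, q j * (b i j : ℝ) = q j * ∑ i, (b i j : ℝ) := by rw [Finset.mul_sum]
      _ ≤ q j * (c j : ℝ) := mul_le_mul_of_nonneg_left hcb (hq j)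
      _ = (c j : ℝ) * q j := mul_comm _ _
  have key : ∀ (q : Fin m → ℝ), (∀ j, 0 ≤ q j) →
      ∀ (b : Fin n → Fin m → ℕ), (∀ i j, b i j ≤ c j) → (∀ j, ∑ i, b i j ≤ c j) →
      ∑ i, v i (b i) ≤ (∑ j, (c j : ℝ) * q j) + ∑ i, U i q := by
    intro q hq b hbc hbf
    have h2 : ∑ i, (v i (b i) - ∑ j, q j * (b i j : ℝ)) ≤ ∑ i, U i q :=
      Finset.sum_le_sum fun i _ => (hU i q).2 ⟨b i, hbc i, rfl⟩
    rw [Finset.sum_sub_distrib] at h2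
    have h3 := hrev q hq b hbf
    linarith
  -- W(p, v) = Σ v(a)
  have Wp : (∑ j, (c j : ℝ) * p j) + ∑ i, U i p = ∑ i, v i (a i) := by
    have : ∑ i, U i p = ∑ i, (v i (a i) - ∑ j, p j * (a i j : ℝ)) :=
      Finset.sum_congr rfl fun i _ => (hamax i).symm
    rw [this, Finset.sum_sub_distrib, harev]
    ring
  -- W(p', v) ≤ W(p, v)
  have h4 : (∑ j, (c j : ℝ) * p' j) + ∑ i, U i p' ≤ ∑ i, v i (a i) := by
    have := hmin p hp ⟨a, hac, haf, hamax⟩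
    linarith [Wp]
  -- W(p', v) ≥ Σ v(a)
  have h5 := key p' hp' a hac haf
  have Wp' : (∑ j, (c j : ℝ) * p' j) + ∑ i, U i p' = ∑ i, v i (a i) :=
    le_antisymm h4 h5
  -- slack terms
  have ht0 : ∀ i, 0 ≤ U i p' - (v i (a i) - ∑ j, p' j * (a i j : ℝ)) := fun i =>
    sub_nonneg.2 ((hU i p').2 ⟨a i, hac i, rfl⟩)
  have htsum : ∑ i, (U i p' - (v i (a i) - ∑ j, p' j * (a i j : ℝ)))
      = (∑ i, ∑ j, p' j * (a i j : ℝ)) - ∑ j, (c j : ℝ) * p' j := by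
    rw [Finset.sum_sub_distrib, Finset.sum_sub_distrib]
    linarith [Wp']
  have htle : ∑ i, (U i p' - (v i (a i) - ∑ j, p' j * (a i j : ℝ))) ≤ 0 := by
    rw [htsum]
    linarith [hrev p' hp' a haf]
  have htz : ∑ i, (U i p' - (v i (a i) - ∑ j, p' j * (a i j : ℝ))) = 0 :=
    le_antisymm htle (Finset.sum_nonneg fun i _ => ht0 i)
  have hterm : ∀ i ∈ Finset.univ,
      U i p' - (v i (a i) - ∑ j, p' j * (a i j : ℝ)) = 0 :=
    (Finset.sum_eq_zero_iff_of_nonneg (fun i _ => ht0 i)).1 htz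
  refine ⟨a, hac, haf, fun i => by linarith [hterm i (Finset.mem_univ i)], ?_, ?_⟩
  · have := htsum
    rw [htz] at this
    linarith
  · intro b hbc hbf
    have := key p' hp' b hbc hbf
    linarith [Wp']
end

section
/- Let g : X → ℝ be a value function on the finite bundle space X. If the indirect utility function U(·, g) := max_{x∈X} (g(x) − ⟨·, x⟩) is differentiable at p ∈ ℝ_{>0}^m, then the set of maximizers argmax_{x∈X} (g(x) − ⟨p, x⟩) is a singleton {x*}, and the gradient of U(·, g) at p equals −x*. -/
/-- If the indirect utility `U(·, g) = max_{x∈X}(g(x) − ⟨·, x⟩)` is differentiable at a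
strictly positive price vector `p`, then the set of maximizers at `p` is a singleton
`{x*}` and the gradient of `U(·, g)` at `p` equals `−x*`. -/
theorem differentiable_implies_unique_maximizer_and_gradient
    (m : ℕ) (X : Set (Fin m → ℕ)) (hXfin : X.Finite) (hXne : X.Nonempty)
    (g : (Fin m → ℕ) → ℝ)
    (U : EuclideanSpace ℝ (Fin m) → ℝ)
    (hU : ∀ q : EuclideanSpace ℝ (Fin m), IsGreatest
      {u : ℝ | ∃ x ∈ X, u = g x - ∑ j, q j * (x j : ℝ)} (U q))
    (p : EuclideanSpace ℝ (Fin m)) (hp : ∀ j, 0 < p j)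
    (hdiff : DifferentiableAt ℝ U p) :
    ∃ xstar : Fin m → ℕ, xstar ∈ X ∧
      (U p = g xstar - ∑ j, p j * (xstar j : ℝ)) ∧
      (∀ x ∈ X, U p = g x - ∑ j, p j * (x j : ℝ) → x = xstar) ∧
      (∀ j, gradient U p j = -(xstar j : ℝ)) := by
  obtain ⟨⟨xstar, hxX, hxeq⟩, _⟩ := hU p
  -- the real vector associated to a bundle
  set cvec : (Fin m → ℕ) → EuclideanSpace ℝ (Fin m) := fun x => WithLp.toLp 2 (fun j => (x j : ℝ)) with hcvec
  -- Key fact: for any maximizer x at p, the Fréchet derivative of U at p is -⟪x, ·⟫.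
  have key : ∀ x ∈ X, U p = g x - ∑ j, p j * (x j : ℝ) →
      fderiv ℝ U p = -(innerSL ℝ (cvec x)) := by
    intro x hx hxm
    have hfx : ∀ q : EuclideanSpace ℝ (Fin m),
        g x - ∑ j, q j * (x j : ℝ) = g x - (innerSL ℝ (cvec x)) q := by
      intro q
      simp only [innerSL_apply_apply, PiLp.inner_apply, RCLike.inner_apply, conj_trivial, hcvec, PiLp.toLp_apply]
    have hf : HasFDerivAt (fun q : EuclideanSpace ℝ (Fin m) => g x - ∑ j, q j * (x j : ℝ))
        (-(innerSL ℝ (cvec x))) p := by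
      have h1 := (hasFDerivAt_const (g x) p).sub (innerSL ℝ (cvec x)).hasFDerivAt
      have h2 : (0 : EuclideanSpace ℝ (Fin m) →L[ℝ] ℝ) - innerSL ℝ (cvec x)
          = -(innerSL ℝ (cvec x)) := by simp
      rw [h2] at h1
      exact h1.congr_of_eventuallyEq (Filter.Eventually.of_forall fun q => hfx q)
    have hmin : IsLocalMin
        (fun q : EuclideanSpace ℝ (Fin m) => U q - (g x - ∑ j, q j * (x j : ℝ))) p := by
      apply Filter.Eventually.of_forall
      intro q
      have h1 : g x - ∑ j, q j * (x j : ℝ) ≤ U q := (hU q).2 ⟨x, hx, rfl⟩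
      have h2 : U p - (g x - ∑ j, p j * (x j : ℝ)) = 0 := by rw [hxm]; ring
      simpa [h2] using sub_nonneg.2 h1
    have hz := hmin.fderiv_eq_zero
    have hsub : fderiv ℝ
        (fun q : EuclideanSpace ℝ (Fin m) => U q - (g x - ∑ j, q j * (x j : ℝ))) p
        = fderiv ℝ U p - (-(innerSL ℝ (cvec x))) := by
      rw [fderiv_fun_sub hdiff hf.differentiableAt, hf.fderiv]
    rw [hsub] at hz
    exact sub_eq_zero.mp hz
  have hstar := key xstar hxX hxeq
  refine ⟨xstar, hxX, hxeq, ?_, ?_⟩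
  · -- uniqueness of the maximizer
    intro x hx hxm
    have hx' := key x hx hxm
    have heq : innerSL ℝ (cvec x) = innerSL ℝ (cvec xstar) := by
      have h := hstar.symm.trans hx'
      exact (neg_inj.mp h).symm
    funext j
    have := congrArg (fun L : EuclideanSpace ℝ (Fin m) →L[ℝ] ℝ =>
      L (EuclideanSpace.single j 1)) heq
    simp only [innerSL_apply_apply, EuclideanSpace.inner_single_right, conj_trivial, one_mul,
      hcvec, PiLp.toLp_apply] at this
    exact_mod_cast this
  · -- the gradient is -xstar
    intro j
    have h1 : HasFDerivAt U (-(innerSL ℝ (cvec xstar))) p := by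
      rw [← hstar]; exact hdiff.hasFDerivAt
    have h2 : (InnerProductSpace.toDual ℝ (EuclideanSpace ℝ (Fin m))) (-(cvec xstar))
        = -(innerSL ℝ (cvec xstar)) := by
      ext v
      simp [InnerProductSpace.toDual_apply_apply, inner_neg_left]
    have hgrad : HasGradientAt U (-(cvec xstar)) p := by
      rw [hasGradientAt_iff_hasFDerivAt, h2]; exact h1
    rw [hgrad.gradient]
    simp [hcvec]
end

section
/- Multiset universality: every function v : X → ℝ_{≥0} on the multiset bundle space X = Π_{j=1}^m {0,...,c_j} that is monotone (a ≤ b coordinatewise implies v(a) ≤ v(b)) and normalized (v(0,...,0) = 0) can be represented exactly by a multiset MVNN with nonnegative weights, nonpositive biases, and bounded-ReLU activations φ_{0,1}(z) = min(1, max(0, z)); in fact three nonlinear hidden layers suffice. -/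
/-- The hidden layers of a multiset MVNN: `d k` is the width of layer `k` (with
`d 0` the input dimension `m`), `W k`/`b k` the weights/biases mapping layer `k` to
layer `k+1`, and `t k` the bReLU cutoff of layer `k+1`. Each hidden layer applies
`z ↦ φ_{0,t}(W z + b)` componentwise, with `φ_{0,t}(z) = min t (max 0 z)`. -/
noncomputable def mMVNNHidden (d : ℕ → ℕ) (W : ∀ k, Fin (d (k + 1)) → Fin (d k) → ℝ)
    (b : ∀ k, Fin (d (k + 1)) → ℝ) (t : ℕ → ℝ) :
    (k : ℕ) → (Fin (d 0) → ℝ) → (Fin (d k) → ℝ)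
  | 0 => fun z => z
  | (k + 1) => fun z i =>
      min (t k) (max 0 ((∑ j, W k i j * mMVNNHidden d W b t k z j) + b k i))

open Finset

lemma ind_mul_ind (a b : Prop) [Decidable a] [Decidable b] :
    (if a then (1:ℝ) else 0) * (if b then 1 else 0) = if a ∧ b then 1 else 0 := by
  by_cases ha : a <;> by_cases hb : b <;> simp [ha, hb]

lemma phi_nat (a b : ℕ) : min (1:ℝ) (max 0 ((a:ℝ) - (b:ℝ))) = if b < a then 1 else 0 := by
  rcases lt_or_ge b a with h | h
  · rw [if_pos h]
    have h1 : (1:ℝ) ≤ (a:ℝ) - (b:ℝ) := by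
      have : (b:ℝ) + 1 ≤ (a:ℝ) := by exact_mod_cast h
      linarith
    rw [max_eq_right (by linarith), min_eq_left h1]
  · rw [if_neg (not_lt.2 h)]
    have : (a:ℝ) ≤ (b:ℝ) := by exact_mod_cast h
    rw [max_eq_left (by linarith), min_eq_right (by norm_num)]

lemma phi_exists {ι : Type*} [Fintype ι] (p : ι → Prop) [DecidablePred p] :
    min (1:ℝ) (max 0 (∑ j, if p j then (1:ℝ) else 0)) = if ∃ j, p j then 1 else 0 := by
  rw [Finset.sum_boole]
  by_cases h : ∃ j, p j
  · rw [if_pos h]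
    obtain ⟨j, hj⟩ := h
    have h1 : 1 ≤ #(univ.filter p) := Finset.card_pos.2 ⟨j, by simp [hj]⟩
    have h1' : (1:ℝ) ≤ (#(univ.filter p) : ℝ) := by exact_mod_cast h1
    rw [max_eq_right (by linarith), min_eq_left h1']
  · rw [if_neg h]
    push_neg at h
    have : univ.filter p = ∅ := by simp [Finset.filter_eq_empty_iff, h]
    simp [this]

lemma phi_forall {N : ℕ} (l : Fin N) (p : Fin N → Prop) [DecidablePred p] :
    min (1:ℝ) (max 0 ((∑ j, (if j ≤ l then (1:ℝ) else 0) * (if p j then 1 else 0)) + -((l:ℕ):ℝ)))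
      = if ∀ j ≤ l, p j then 1 else 0 := by
  have hIic : univ.filter (fun j => j ≤ l) = Finset.Iic l := by ext a; simp
  have hsum : (∑ j, (if j ≤ l then (1:ℝ) else 0) * (if p j then 1 else 0))
      = (#((Finset.Iic l).filter p) : ℝ) := by
    simp only [ind_mul_ind]
    rw [Finset.sum_boole, ← hIic, Finset.filter_filter]
  rw [hsum]
  have hcard : #(Finset.Iic l) = (l:ℕ) + 1 := Fin.card_Iic l
  by_cases h : ∀ j ≤ l, p j
  · rw [if_pos h]
    have heq : (Finset.Iic l).filter p = Finset.Iic l :=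
      Finset.filter_true_of_mem (fun j hj => h j (Finset.mem_Iic.1 hj))
    rw [heq, hcard]
    have : ((((l:ℕ) + 1 : ℕ)):ℝ) + -((l:ℕ):ℝ) = 1 := by push_cast; ring
    rw [this]; norm_num
  · rw [if_neg h]
    have hlt : #((Finset.Iic l).filter p) < (l:ℕ) + 1 := by
      rw [← hcard]
      apply Finset.card_lt_card
      rw [Finset.ssubset_iff_of_subset (Finset.filter_subset _ _)]
      push_neg at h
      obtain ⟨j, hj, hpj⟩ := h
      exact ⟨j, Finset.mem_Iic.2 hj, by simp [hpj]⟩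
    have hle : (#((Finset.Iic l).filter p) : ℝ) + -((l:ℕ):ℝ) ≤ 0 := by
      have h2 : #((Finset.Iic l).filter p) ≤ (l:ℕ) := by omega
      have h3 : (#((Finset.Iic l).filter p) : ℝ) ≤ ((l:ℕ):ℝ) := by exact_mod_cast h2
      linarith
    rw [max_eq_left hle, min_eq_right (by norm_num)]

@[reducible] def netd (m N : ℕ) : ℕ → ℕ
  | 0 => m
  | 1 => N * m
  | 2 => N
  | _ => N

variable {m N : ℕ}

noncomputable def netW (c : Fin m → ℕ) :
    ∀ k, Fin (netd m N (k + 1)) → Fin (netd m N k) → ℝ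
  | 0 => fun i j =>
      if j = (finProdFinEquiv.symm i).2 then (c (finProdFinEquiv.symm i).2 : ℝ) else 0
  | 1 => fun i j => if (finProdFinEquiv.symm j).1 = i then 1 else 0
  | 2 => fun i j => if j ≤ i then 1 else 0
  | (_ + 3) => fun _ _ => 0

noncomputable def netb (c : Fin m → ℕ) (f : Fin N → ∀ j : Fin m, Fin (c j + 1)) :
    ∀ k, Fin (netd m N (k + 1)) → ℝ
  | 0 => fun i => -(((f (finProdFinEquiv.symm i).1) (finProdFinEquiv.symm i).2 : ℕ) : ℝ)
  | 1 => fun _ => 0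
  | 2 => fun i => -(((i : Fin N) : ℕ) : ℝ)
  | (_ + 3) => fun _ => 0

lemma mMVNNHidden_succ (d : ℕ → ℕ) (W : ∀ k, Fin (d (k + 1)) → Fin (d k) → ℝ)
    (b : ∀ k, Fin (d (k + 1)) → ℝ) (t : ℕ → ℝ) (k : ℕ) (z : Fin (d 0) → ℝ) (i : Fin (d (k+1))) :
    mMVNNHidden d W b t (k+1) z i
      = min (t k) (max 0 ((∑ j, W k i j * mMVNNHidden d W b t k z j) + b k i)) := rfl

section
variable (c : Fin m → ℕ) (f : Fin N → ∀ j : Fin m, Fin (c j + 1)) (x : Fin m → ℕ)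

lemma layer1_eval (hc : ∀ j, 1 ≤ c j) (i : Fin (netd m N 1)) :
    mMVNNHidden (netd m N) (netW c) (netb c f) (fun _ => (1:ℝ)) 1
      (fun j => (x j : ℝ) / (c j : ℝ)) i
    = if ((f (finProdFinEquiv.symm i).1) (finProdFinEquiv.symm i).2 : ℕ)
        < x (finProdFinEquiv.symm i).2 then 1 else 0 := by
  rw [mMVNNHidden_succ]
  show min (1:ℝ) (max 0 ((∑ j : Fin m,
      (if j = (finProdFinEquiv.symm i).2 then (c (finProdFinEquiv.symm i).2 : ℝ) else 0)
        * ((x j : ℝ) / (c j : ℝ)))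
      + -(((f (finProdFinEquiv.symm i).1) (finProdFinEquiv.symm i).2 : ℕ) : ℝ))) = _
  set k0 := (finProdFinEquiv.symm i).2 with hk0
  have hsum : (∑ j : Fin m,
      (if j = k0 then (c k0 : ℝ) else 0) * ((x j : ℝ) / (c j : ℝ)))
      = (x k0 : ℝ) := by
    have hstep : ∀ j : Fin m, (if j = k0 then (c k0 : ℝ) else 0) * ((x j : ℝ) / (c j : ℝ))
        = if j = k0 then (c k0 : ℝ) * ((x j : ℝ) / (c j : ℝ)) else 0 := by
      intro j; by_cases hj : j = k0 <;> simp [hj]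
    rw [Finset.sum_congr rfl (fun j _ => hstep j), Finset.sum_ite_eq' univ k0]
    simp only [Finset.mem_univ, if_true]
    have hne : (c k0 : ℝ) ≠ 0 := by
      have := hc k0; positivity
    field_simp
  rw [hsum, ← sub_eq_add_neg]
  exact phi_nat _ _

lemma layer2_eval (hc : ∀ j, 1 ≤ c j) (l : Fin (netd m N 2)) :
    mMVNNHidden (netd m N) (netW c) (netb c f) (fun _ => (1:ℝ)) 2
      (fun j => (x j : ℝ) / (c j : ℝ)) l
    = if ∃ k, ((f l) k : ℕ) < x k then 1 else 0 := by
  rw [mMVNNHidden_succ]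
  show min (1:ℝ) (max 0 ((∑ i : Fin (N * m),
      (if (finProdFinEquiv.symm i).1 = l then (1:ℝ) else 0)
        * mMVNNHidden (netd m N) (netW c) (netb c f) (fun _ => (1:ℝ)) 1
            (fun j => (x j : ℝ) / (c j : ℝ)) i) + 0)) = _
  rw [Finset.sum_congr rfl (fun i _ => by rw [layer1_eval c f x hc i])]
  have hsum : (∑ i : Fin (N * m),
      (if (finProdFinEquiv.symm i).1 = l then (1:ℝ) else 0)
        * (if ((f (finProdFinEquiv.symm i).1) (finProdFinEquiv.symm i).2 : ℕ)
            < x (finProdFinEquiv.symm i).2 then 1 else 0))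
      = ∑ k : Fin m, (if ((f l) k : ℕ) < x k then (1:ℝ) else 0) := by
    rw [Fintype.sum_equiv (finProdFinEquiv.symm)
      _ (fun q : Fin N × Fin m => (if q.1 = l then (1:ℝ) else 0)
          * (if ((f q.1) q.2 : ℕ) < x q.2 then 1 else 0)) (fun i => rfl)]
    rw [Fintype.sum_prod_type]
    have h1 : ∀ a : Fin N, (∑ y : Fin m, (if (a, y).1 = l then (1:ℝ) else 0)
          * (if ((f (a, y).1) (a, y).2 : ℕ) < x (a, y).2 then 1 else 0))
        = if a = l then (∑ k : Fin m, if ((f l) k : ℕ) < x k then (1:ℝ) else 0) else 0 := by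
      intro a
      by_cases ha : a = l
      · subst ha; simp
      · simp [ha]
    rw [Finset.sum_congr rfl (fun a _ => h1 a)]
    have hlN : l ∈ (univ : Finset (Fin N)) := Finset.mem_univ _
    rw [Finset.sum_ite_eq' (univ : Finset (Fin N)) (l : Fin N)
      (fun _ => ∑ k : Fin m, if ((f l) k : ℕ) < x k then (1:ℝ) else 0), if_pos hlN]
  rw [hsum, add_zero]
  convert phi_exists (fun k => ((f l) k : ℕ) < x k)

lemma layer3_eval (hc : ∀ j, 1 ≤ c j) (l : Fin (netd m N 3)) :
    mMVNNHidden (netd m N) (netW c) (netb c f) (fun _ => (1:ℝ)) 3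
      (fun j => (x j : ℝ) / (c j : ℝ)) l
    = if ∀ j ≤ l, ∃ k, ((f j) k : ℕ) < x k then 1 else 0 := by
  rw [mMVNNHidden_succ]
  show min (1:ℝ) (max 0 ((∑ j : Fin N,
      (if j ≤ l then (1:ℝ) else 0)
        * mMVNNHidden (netd m N) (netW c) (netb c f) (fun _ => (1:ℝ)) 2
            (fun j => (x j : ℝ) / (c j : ℝ)) j) + -(((l : Fin N) : ℕ) : ℝ))) = _
  rw [Finset.sum_congr rfl (fun j _ => by rw [layer2_eval c f x hc j])]
  exact phi_forall l _

end
variable (v : (Fin m → ℕ) → ℝ)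

noncomputable def vvF (c : Fin m → ℕ) (f : Fin N → ∀ j : Fin m, Fin (c j + 1)) : Fin N → ℝ :=
  fun i => v (fun j => ((f i) j : ℕ))

noncomputable def WoutF (c : Fin m → ℕ) (f : Fin N → ∀ j : Fin m, Fin (c j + 1)) : Fin N → ℝ :=
  fun l => if h : (l : ℕ) + 1 < N then vvF v c f ⟨(l : ℕ) + 1, h⟩ - vvF v c f l else 0

noncomputable def gF (c : Fin m → ℕ) (f : Fin N → ∀ j : Fin m, Fin (c j + 1)) : ℕ → ℝ :=
  fun l => if h : l < N then vvF v c f ⟨l, h⟩ else 0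


/-- Multiset universality: every monotone and normalized value function
`v : X → ℝ_{≥0}` on the multiset bundle space `X = Π_j {0,…,c_j}` is represented
exactly by a multiset MVNN with nonnegative weights, nonpositive biases, bounded-ReLU
activations `φ_{0,1}`, and three nonlinear hidden layers. -/
theorem mMVNN_universality (m : ℕ) (c : Fin m → ℕ) (hc : ∀ j, 1 ≤ c j)
    (v : (Fin m → ℕ) → ℝ)
    (hvnn : ∀ x : Fin m → ℕ, (∀ j, x j ≤ c j) → 0 ≤ v x)
    (hv0 : v (fun _ => 0) = 0)
    (hmono : ∀ a a' : Fin m → ℕ, (∀ j, a j ≤ c j) → (∀ j, a' j ≤ c j) →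
      (∀ j, a j ≤ a' j) → v a ≤ v a') :
    ∃ (d : ℕ → ℕ) (hd0 : d 0 = m)
      (W : ∀ k, Fin (d (k + 1)) → Fin (d k) → ℝ)
      (b : ∀ k, Fin (d (k + 1)) → ℝ)
      (Wout : Fin (d 3) → ℝ),
      (∀ k i j, 0 ≤ W k i j) ∧ (∀ k i, b k i ≤ 0) ∧ (∀ i, 0 ≤ Wout i) ∧
      ∀ x : Fin m → ℕ, (∀ j, x j ≤ c j) →
        (∑ i, Wout i *
          mMVNNHidden d W b (fun _ => (1 : ℝ)) 3
            (fun j => (x (Fin.cast hd0 j) : ℝ) / (c (Fin.cast hd0 j) : ℝ)) i) = v x := by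
  classical
  set N := Fintype.card ((j : Fin m) → Fin (c j + 1)) with hN
  set e : Fin N ≃ ((j : Fin m) → Fin (c j + 1)) :=
    (Fintype.equivFin ((j : Fin m) → Fin (c j + 1))).symm with he
  set f : Fin N → ∀ j : Fin m, Fin (c j + 1) :=
    fun i => e (Tuple.sort (fun i => v (fun j => ((e i) j : ℕ))) i) with hf
  have hmonovv : Monotone (vvF v c f) :=
    Tuple.monotone_sort (fun i => v (fun j => ((e i) j : ℕ)))
  have hfsurj : ∀ t : (∀ j : Fin m, Fin (c j + 1)), ∃ p : Fin N, f p = t := by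
    intro t
    refine ⟨(Tuple.sort (fun i => v (fun j => ((e i) j : ℕ)))).symm (e.symm t), ?_⟩
    simp [hf]
  refine ⟨netd m N, rfl, netW c, netb c f, WoutF v c f, ?_, ?_, ?_, ?_⟩
  · rintro (_ | _ | _ | k) i j
    · show (0:ℝ) ≤ if j = (finProdFinEquiv.symm i).2 then (c (finProdFinEquiv.symm i).2 : ℝ) else 0
      split <;> positivity
    · show (0:ℝ) ≤ if (finProdFinEquiv.symm j).1 = i then 1 else 0
      split <;> norm_num
    · show (0:ℝ) ≤ if j ≤ i then 1 else 0
      split <;> norm_num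
    · exact le_refl 0
  · rintro (_ | _ | _ | k) i
    · show -(((f (finProdFinEquiv.symm i).1) (finProdFinEquiv.symm i).2 : ℕ) : ℝ) ≤ 0
      simp
    · exact le_refl 0
    · show -(((i : Fin N) : ℕ) : ℝ) ≤ 0
      simp
    · exact le_refl 0
  · intro i
    rw [WoutF]
    split
    · rename_i h
      have : (i : Fin N) ≤ (⟨(i : ℕ) + 1, h⟩ : Fin N) := by
        simp [Fin.le_def]
      have := hmonovv this
      linarith
    · exact le_refl 0
  · intro x hx
    have hQ : ∃ l : ℕ, ∃ h : l < N, ∀ k, x k ≤ ((f ⟨l, h⟩) k : ℕ) := by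
      obtain ⟨p, hp⟩ := hfsurj (fun j => ⟨x j, Nat.lt_succ_of_le (hx j)⟩)
      refine ⟨(p : ℕ), p.2, fun k => ?_⟩
      have : f ⟨(p : ℕ), p.2⟩ = f p := by congr 1
      rw [this, hp]
    set L := Nat.find hQ with hLdef
    obtain ⟨hLN, hxle⟩ := Nat.find_spec hQ
    have hiff : ∀ i : Fin (netd m N 3), (∀ j ≤ i, ∃ k, ((f j) k : ℕ) < x k) ↔ (i : ℕ) < L := by
      intro i
      constructor
      · intro h
        by_contra hcon
        push_neg at hcon
        obtain ⟨k, hk⟩ := h ⟨L, hLN⟩ (by rw [Fin.le_def]; exact hcon)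
        exact absurd hk (not_lt.2 (hxle k))
      · intro hiL j hji
        by_contra hnk
        push_neg at hnk
        have hQj : ∃ h : (j : ℕ) < N, ∀ k, x k ≤ ((f ⟨(j : ℕ), h⟩) k : ℕ) := by
          refine ⟨j.2, fun k => ?_⟩
          have : f ⟨(j : ℕ), j.2⟩ = f j := by congr 1
          rw [this]
          exact hnk k
        have hjL : (j : ℕ) < L := lt_of_le_of_lt (Fin.le_def.1 hji) hiL
        exact Nat.find_min hQ hjL hQj
    have hterm : ∀ i : Fin (netd m N 3),
        WoutF v c f i *
          mMVNNHidden (netd m N) (netW c) (netb c f) (fun _ => (1:ℝ)) 3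
            (fun j => (x j : ℝ) / (c j : ℝ)) i
        = (fun l : ℕ => if l < L then gF v c f (l + 1) - gF v c f l else 0) (i : ℕ) := by
      intro i
      rw [layer3_eval c f x hc i, if_congr (hiff i) rfl rfl]
      by_cases h : (i : ℕ) < L
      · rw [if_pos h, mul_one]
        simp only [if_pos h]
        have h1 : (i : ℕ) + 1 < N := by omega
        rw [WoutF, gF, gF, dif_pos h1, dif_pos h1, dif_pos (show (i:ℕ) < N from i.2)]
        congr 1
      · rw [if_neg h, mul_zero]
        simp only [if_neg h]
    calc (∑ i, WoutF v c f i *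
          mMVNNHidden (netd m N) (netW c) (netb c f) (fun _ => (1:ℝ)) 3
            (fun j => (x j : ℝ) / (c j : ℝ)) i)
        = ∑ i : Fin (netd m N 3),
            (fun l : ℕ => if l < L then gF v c f (l + 1) - gF v c f l else 0) (i : ℕ) :=
          Finset.sum_congr rfl (fun i _ => hterm i)
      _ = ∑ l ∈ Finset.range (netd m N 3),
            (if l < L then gF v c f (l + 1) - gF v c f l else 0) :=
          Fin.sum_univ_eq_sum_range (fun l : ℕ => if l < L then gF v c f (l + 1) - gF v c f l else 0) (netd m N 3)
      _ = ∑ l ∈ Finset.range L, (if l < L then gF v c f (l + 1) - gF v c f l else 0) := by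
          refine (Finset.sum_subset (Finset.range_subset_range.2 (le_of_lt hLN)) ?_).symm
          intro l _ hl
          exact if_neg (fun hcon => hl (Finset.mem_range.2 hcon))
      _ = ∑ l ∈ Finset.range L, (gF v c f (l + 1) - gF v c f l) :=
          Finset.sum_congr rfl (fun l hl => if_pos (Finset.mem_range.1 hl))
      _ = gF v c f L - gF v c f 0 := Finset.sum_range_sub _ _
      _ = v x := by
          have h0N : 0 < N := lt_of_le_of_lt (Nat.zero_le L) hLN
          have hg0 : gF v c f 0 = 0 := by
            obtain ⟨q, hq⟩ := hfsurj (fun j => ⟨0, Nat.succ_pos _⟩)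
            have hle1 : vvF v c f ⟨0, h0N⟩ ≤ vvF v c f q := hmonovv (by simp [Fin.le_def])
            have hq0 : vvF v c f q = 0 := by
              rw [vvF, hq]
              simpa using hv0
            have hge : 0 ≤ vvF v c f ⟨0, h0N⟩ :=
              hvnn (fun j => ((f ⟨0, h0N⟩) j : ℕ)) (fun j => Fin.is_le _)
            rw [gF, dif_pos h0N]
            linarith
          have hgL : gF v c f L = v x := by
            obtain ⟨p, hp⟩ := hfsurj (fun j => ⟨x j, Nat.lt_succ_of_le (hx j)⟩)
            have hLp : L ≤ (p : ℕ) := by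
              apply Nat.find_min'
              refine ⟨p.2, fun k => ?_⟩
              have : f ⟨(p : ℕ), p.2⟩ = f p := by congr 1
              rw [this, hp]
            have hle1 : vvF v c f ⟨L, hLN⟩ ≤ vvF v c f p := hmonovv (by rw [Fin.le_def]; exact hLp)
            have hpx : vvF v c f p = v x := by
              rw [vvF, hp]
            have hle2 : v x ≤ vvF v c f ⟨L, hLN⟩ := by
              rw [vvF]
              exact hmono x _ hx (fun j => Fin.is_le _) hxle
            rw [gF, dif_pos hLN]
            linarith
          rw [hgL, hg0, sub_zero]
end

section
/- For every value function v : X → ℝ_{≥0} on a finite multiset bundle space X enumerated as x_1,...,x_{|X|} with x_1 = (0,...,0) and values w_l := v(x_l) sorted nondecreasingly (w_1 = 0, and l < j implies w_l ≤ w_j), it holds for every ξ ∈ X that v(ξ) = Σ_{l=1}^{|X|−1} (w_{l+1} − w_l) · 1[∀ j ∈ {1,...,l} : ξ ≰ x_j], where ξ ≰ x means ∃ k : ξ_k > x_k. -/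
/-- Telescoping identity: enumerate the bundle space `X = Π_j {0,…,c_j}` as
`e 0, …, e (L−1)` with `e 0 = (0,…,0)` and values `v (e l)` sorted nondecreasingly.
Then for every bundle `ξ ∈ X`,
`v(ξ) = Σ_{l=0}^{L−2} (v(e (l+1)) − v(e l)) · 1[∀ j ≤ l : ξ ≰ e j]`,
where `ξ ≰ x` means `∃ k, x k < ξ k`. -/
theorem value_telescoping_identity (m L : ℕ) (c : Fin m → ℕ)
    (v : (Fin m → ℕ) → ℝ)
    (hvnn : ∀ x : Fin m → ℕ, (∀ j, x j ≤ c j) → 0 ≤ v x)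
    (hmono : ∀ a a' : Fin m → ℕ, (∀ j, a j ≤ c j) → (∀ j, a' j ≤ c j) →
      (∀ j, a j ≤ a' j) → v a ≤ v a')
    (e : ℕ → (Fin m → ℕ))
    (hbij : Set.BijOn e (Set.Iio L) {x : Fin m → ℕ | ∀ j, x j ≤ c j})
    (he0 : e 0 = fun _ => 0)
    (hv0 : v (fun _ => 0) = 0)
    (hsorted : ∀ l j, l ≤ j → j < L → v (e l) ≤ v (e j)) :
    ∀ ξ : Fin m → ℕ, (∀ j, ξ j ≤ c j) →
      v ξ = ∑ l ∈ Finset.range (L - 1),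
        (v (e (l + 1)) - v (e l)) *
          (if ∀ j ≤ l, ∃ k, e j k < ξ k then (1 : ℝ) else 0) := by
  intro ξ hξ
  obtain ⟨i, hiL, hi⟩ := hbij.surjOn hξ
  have hiL : i < L := hiL
  have hex : ∃ j, ∀ k, ξ k ≤ e j k := ⟨i, fun k => le_of_eq (congrFun hi k).symm⟩
  set t := Nat.find hex with ht
  have hti : t ≤ i := Nat.find_le (fun k => le_of_eq (congrFun hi k).symm)
  have htL : t < L := lt_of_le_of_lt hti hiL
  have hvt : v (e t) = v ξ := by
    apply le_antisymm
    · calc v (e t) ≤ v (e i) := hsorted t i hti hiL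
        _ = v ξ := by rw [hi]
    · exact hmono ξ (e t) hξ (hbij.mapsTo (Set.mem_Iio.mpr htL)) (Nat.find_spec hex)
  have hind : ∀ l, (if ∀ j ≤ l, ∃ k, e j k < ξ k then (1:ℝ) else 0)
      = if l < t then 1 else 0 := by
    intro l
    by_cases hlt : l < t
    · rw [if_pos hlt, if_pos]
      intro j hj
      have := Nat.find_min hex (lt_of_le_of_lt hj hlt)
      push_neg at this
      exact this
    · rw [if_neg hlt, if_neg]
      intro hP
      obtain ⟨k, hk⟩ := hP t (Nat.le_of_not_lt hlt)
      exact absurd (Nat.find_spec hex k) (not_le.mpr hk)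
  have htL1 : t ≤ L - 1 := by omega
  calc v ξ = v (e t) - v (e 0) := by rw [he0, hv0, hvt]; ring
    _ = ∑ l ∈ Finset.range t, (v (e (l+1)) - v (e l)) :=
        (Finset.sum_range_sub (fun l => v (e l)) t).symm
    _ = ∑ l ∈ Finset.range (L-1), (if l < t then v (e (l+1)) - v (e l) else 0) := by
        rw [← Finset.sum_subset (Finset.range_subset_range.mpr htL1)
          (fun l _ hl => if_neg (fun h => hl (Finset.mem_range.mpr h)))]
        exact Finset.sum_congr rfl fun l hl => (if_pos (Finset.mem_range.mp hl)).symm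
    _ = _ := by
        refine Finset.sum_congr rfl fun l _ => ?_
        rw [hind l]
        by_cases h : l < t <;> simp [h]
end
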